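/- arXiv:2004.08167 — 3 statements merged into one kernel-verified Lean document; each statement's English description precedes it below -/
import Mathlib

section
/- Let r, δ, c, ε > 0 with εc < 1, and for λ > 0 let K*(λ) = (√((δε − cλ/(r+δ))² + 4δλ/(r+δ)) − δε − cλ/(r+δ))/(2δ). Then λ ↦ K*(λ) is strictly increasing on (0,∞). -/
/-!
`K*(λ)` is the positive root of the stationarity equation
`λ (1 - ε c - c K) = (r + δ) δ K (K + ε)`. For `K > 0` the right-hand side increases with `K`,
while the left-hand side decreases with `K` and increases with `λ` (its second factor must be
positive), so the root moves up as `λ` grows.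
-/

theorem strictMonoOn_of_stationary {K : ℝ → ℝ} {κ m c ε : ℝ} (hκ : 0 < κ) (hc : 0 ≤ c)
    (hε : 0 ≤ ε) (hpos : ∀ lam > 0, 0 < K lam)
    (hstat : ∀ lam > 0, lam * (m - c * K lam) = κ * K lam * (K lam + ε)) :
    StrictMonoOn K (Set.Ioi 0) := by
  intro x hx y hy hxy
  by_contra! hle
  have hKx := hpos x hx
  have hKy := hpos y hy
  have hmargin : 0 < m - c * K y := by
    refine pos_of_mul_pos_right ?_ (le_of_lt hy)
    rw [hstat y hy]
    positivity
  refine lt_irrefl (y * (m - c * K y)) ?_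
  calc
    y * (m - c * K y) = κ * K y * (K y + ε) := hstat y hy
    _ ≤ κ * K x * (K x + ε) := by gcongr
    _ = x * (m - c * K x) := (hstat x hx).symm
    _ ≤ x * (m - c * K y) := by gcongr; exact le_of_lt hx
    _ < y * (m - c * K y) := by gcongr

noncomputable def hashrate (r δ c ε lam : ℝ) : ℝ :=
  (√((δ * ε - c * lam / (r + δ)) ^ 2 + 4 * δ * lam / (r + δ)) - δ * ε - c * lam / (r + δ))
    / (2 * δ)

variable {r δ c ε lam : ℝ}

theorem hashrate_pos (hδ : 0 < δ) (hrδ : 0 < r + δ) (hεc : ε * c < 1) (hlam : 0 < lam) :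
    0 < hashrate r δ c ε lam := by
  have hgap : (δ * ε + c * lam / (r + δ)) ^ 2
      < (δ * ε - c * lam / (r + δ)) ^ 2 + 4 * δ * lam / (r + δ) := by
    have hεc' : 0 < 1 - ε * c := sub_pos.2 hεc
    have : 0 < 4 * δ * lam * (1 - ε * c) / (r + δ) := by positivity
    have hdiff : (δ * ε - c * lam / (r + δ)) ^ 2 + 4 * δ * lam / (r + δ)
        - (δ * ε + c * lam / (r + δ)) ^ 2 = 4 * δ * lam * (1 - ε * c) / (r + δ) := by
      field_simp
      ring
    linarith
  have hsqrt := Real.lt_sqrt_of_sq_lt hgap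
  unfold hashrate
  apply div_pos _ (by positivity)
  linarith

theorem hashrate_stationary (hδ : 0 < δ) (hrδ : 0 < r + δ) (hlam : 0 ≤ lam) :
    lam * (1 - ε * c - c * hashrate r δ c ε lam)
      = (r + δ) * δ * hashrate r δ c ε lam * (hashrate r δ c ε lam + ε) := by
  have hsq := Real.sq_sqrt (by positivity :
    0 ≤ (δ * ε - c * lam / (r + δ)) ^ 2 + 4 * δ * lam / (r + δ))
  unfold hashrate
  generalize √((δ * ε - c * lam / (r + δ)) ^ 2 + 4 * δ * lam / (r + δ)) = S at hsq ⊢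
  linear_combination (norm := skip) (-(r + δ) / (4 * δ)) * hsq
  field_simp
  ring

/-- The stationary hashrate K*(λ) is strictly increasing in the inverse-friction
parameter λ on (0,∞). -/
theorem stmt_10 (r δ c ε : ℝ) (hr : 0 < r) (hδ : 0 < δ) (hc : 0 < c) (hε : 0 < ε)
    (hεc : ε * c < 1) :
    StrictMonoOn (fun lam : ℝ =>
        (Real.sqrt ((δ * ε - c * lam / (r + δ)) ^ 2 + 4 * δ * lam / (r + δ))
          - δ * ε - c * lam / (r + δ)) / (2 * δ))
      (Set.Ioi 0) := by
  have hrδ : 0 < r + δ := add_pos hr hδ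
  exact strictMonoOn_of_stationary (mul_pos hrδ hδ) hc.le hε.le
    (fun _ hlam => hashrate_pos hδ hrδ hεc hlam)
    (fun _ hlam => hashrate_stationary hδ hrδ hlam.le)
end

section
/- Let r, δ, c, ε > 0 with εc < 1, and for λ > 0 let K*(λ) denote the unique positive root of δK² + K(δε + cλ/(r+δ)) + (λ/(r+δ))(cε − 1) = 0, and let U*(λ) = δK*(λ)/λ. Then λ ↦ U*(λ) is strictly decreasing and U*(λ) → 0 as λ → ∞. -/
/-!
Writing `U = δ K / λ`, the quadratic for `K*(λ)` becomes the balance equation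
`λ · ((r + δ) U² + c U) = δ (1 - c ε) - δ ε (r + δ) U`. Its left side increases in both `λ` and
`U > 0` while its right side decreases in `U`, so a larger `λ` forces a smaller `U`; and since the
right side is at most `δ (1 - c ε)`, we get `λ U ≤ δ (1 - c ε) / c`, whence `U → 0`.
-/

open Filter Set

theorem strictAntiOn_of_mul_apply_eq {U φ ψ : ℝ → ℝ} (hU : ∀ x > 0, 0 < U x)
    (hφ : MonotoneOn φ (Ioi 0)) (hφ_pos : ∀ u > 0, 0 < φ u) (hψ : AntitoneOn ψ (Ioi 0))
    (hbalance : ∀ x > 0, x * φ (U x) = ψ (U x)) :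
    StrictAntiOn U (Ioi 0) := by
  intro a ha b hb hab
  by_contra! hle
  have := calc
    ψ (U b) = b * φ (U b) := (hbalance b hb).symm
    _ > a * φ (U b) := by gcongr; exact hφ_pos _ (hU b hb)
    _ ≥ a * φ (U a) := by gcongr; exacts [ha.le, hφ (hU a ha) (hU b hb) hle]
    _ = ψ (U a) := hbalance a ha
    _ ≥ ψ (U b) := hψ (hU a ha) (hU b hb) hle
  exact lt_irrefl _ this

theorem tendsto_zero_of_mul_le {f : ℝ → ℝ} {C : ℝ}
    (hf : ∀ᶠ x in atTop, 0 ≤ f x ∧ x * f x ≤ C) :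
    Tendsto f atTop (nhds 0) := by
  refine squeeze_zero' (g := fun x => C / x) (hf.mono fun _ hx => hx.1) ?_
    (tendsto_const_nhds.div_atTop tendsto_id)
  filter_upwards [hf, eventually_gt_atTop 0] with x hx hx_pos
  rw [le_div_iff₀ hx_pos, mul_comm]
  exact hx.2

theorem mining_balance {r δ c ε lam K : ℝ} (hrδ : r + δ ≠ 0) (hlam : lam ≠ 0)
    (hK : δ * K ^ 2 + K * (δ * ε + c * lam / (r + δ)) + (lam / (r + δ)) * (c * ε - 1) = 0) :
    lam * ((δ * K / lam) ^ 2 * (r + δ) + c * (δ * K / lam))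
      = δ * (1 - c * ε) - δ * ε * (r + δ) * (δ * K / lam) := by
  field_simp at hK ⊢
  linear_combination δ * hK

theorem stmt_11_general (r δ c ε : ℝ) (hr : 0 < r) (hδ : 0 < δ) (hc : 0 < c) (hε : 0 < ε)
    (Kstar : ℝ → ℝ)
    (hKstar : ∀ lam > (0:ℝ), 0 < Kstar lam ∧
      δ * Kstar lam ^ 2 + Kstar lam * (δ * ε + c * lam / (r + δ))
        + (lam / (r + δ)) * (c * ε - 1) = 0) :
    StrictAntiOn (fun lam => δ * Kstar lam / lam) (Set.Ioi 0) ∧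
      Tendsto (fun lam => δ * Kstar lam / lam) atTop (nhds 0) := by
  have hrδ : 0 < r + δ := by positivity
  set U : ℝ → ℝ := fun lam => δ * Kstar lam / lam
  have hU : ∀ lam > 0, 0 < U lam := fun lam hlam => by
    have := (hKstar lam hlam).1
    positivity
  have hbalance : ∀ lam > 0, lam * (U lam ^ 2 * (r + δ) + c * U lam)
      = δ * (1 - c * ε) - δ * ε * (r + δ) * U lam := fun lam hlam =>
    mining_balance hrδ.ne' hlam.ne' (hKstar lam hlam).2
  refine ⟨strictAntiOn_of_mul_apply_eq (φ := fun u => u ^ 2 * (r + δ) + c * u)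
    (ψ := fun u => δ * (1 - c * ε) - δ * ε * (r + δ) * u) hU ?_ (fun u hu => by positivity) ?_
    hbalance, ?_⟩
  · intro u (hu : 0 < u) v _ huv
    dsimp only
    gcongr
  · intro u _ v _ huv
    dsimp only
    gcongr
  · refine tendsto_zero_of_mul_le (C := δ * (1 - c * ε) / c) ?_
    filter_upwards [eventually_gt_atTop 0] with lam hlam
    have hu := hU lam hlam
    refine ⟨hu.le, ?_⟩
    rw [le_div_iff₀ hc]
    calc lam * U lam * c
        ≤ lam * (U lam ^ 2 * (r + δ) + c * U lam) := by
          nlinarith [mul_pos hlam (mul_pos (pow_pos hu 2) hrδ)]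
      _ = δ * (1 - c * ε) - δ * ε * (r + δ) * U lam := hbalance lam hlam
      _ ≤ δ * (1 - c * ε) := by nlinarith [mul_pos (mul_pos (mul_pos hδ hε) hrδ) hu]

/-- The stationary value of a unit of hashrate U*(λ) = δK*(λ)/λ is strictly
decreasing in λ and tends to 0 as λ → ∞. -/
theorem stmt_11 (r δ c ε : ℝ) (hr : 0 < r) (hδ : 0 < δ) (hc : 0 < c) (hε : 0 < ε)
    (hεc : ε * c < 1)
    (Kstar : ℝ → ℝ)
    (hKstar : ∀ lam > (0:ℝ), 0 < Kstar lam ∧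
      δ * Kstar lam ^ 2 + Kstar lam * (δ * ε + c * lam / (r + δ))
        + (lam / (r + δ)) * (c * ε - 1) = 0)
    (huniq : ∀ lam > (0:ℝ), ∀ K > (0:ℝ),
      δ * K ^ 2 + K * (δ * ε + c * lam / (r + δ)) + (lam / (r + δ)) * (c * ε - 1) = 0
        → K = Kstar lam) :
    StrictAntiOn (fun lam => δ * Kstar lam / lam) (Set.Ioi 0) ∧
      Tendsto (fun lam => δ * Kstar lam / lam) atTop (nhds 0) :=
  stmt_11_general r δ c ε hr hδ hc hε Kstar hKstar
end

section
/- Let r, δ, λ, c, ε > 0. Suppose U is a bounded C¹ solution of the penalized master equation 0 = −(r+δ)U + (−δK + λ(U)₊)U'(K) + 1/(K+ε) − c, where (·)₊ denotes the positive part, and suppose U is decreasing with U(0) > 0. Then the ODE K' = −δK + λ(U(K))₊ has a unique nonnegative stationary point, which coincides with the unique positive root K* of δK² + K(δε + cλ/(r+δ)) + (λ/(r+δ))(cε − 1) = 0 (assuming εc < 1). -/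
/-!
A nonnegative stationary point `K` of `K' = -δK + λ (U K)₊` has `U K > 0`: otherwise `K = 0`,
contradicting `U 0 > 0`. So the drift vanishes at `K` with `λ U K = δ K`, and the master equation
collapses to `(r + δ) U K = 1 / (K + ε) - c`; eliminating `U K` gives the quadratic. Since
`εc < 1` its constant term is negative, so it has at most one positive root. A stationary point
exists by the intermediate value theorem, because the drift is `≥ 0` at `0` and `≤ 0` far out,
where the bounded `U` is dominated by `δK`.
-/

theorem eq_of_quadratic_eq_zero_of_pos {a b c x y : ℝ} (ha : 0 < a) (hc : c < 0)
    (hx : 0 < x) (hy : 0 < y) (hqx : a * x ^ 2 + b * x + c = 0)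
    (hqy : a * y ^ 2 + b * y + c = 0) : x = y := by
  by_contra hne
  have hsum : a * (x + y) + b = 0 := by
    have hfac : (x - y) * (a * (x + y) + b) = 0 := by linear_combination hqx - hqy
    exact (mul_eq_zero.mp hfac).resolve_left (sub_ne_zero.mpr hne)
  have hprod : a * x * y = c := by linear_combination x * hsum - hqx
  have : 0 < a * x * y := by positivity
  linarith

theorem exists_nonneg_eq_mul_max_zero {δ lam M : ℝ} {U : ℝ → ℝ} (hδ : 0 < δ)
    (hlam : 0 ≤ lam) (hU : Continuous U) (hM : ∀ K ≥ (0:ℝ), U K ≤ M) :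
    ∃ K ≥ (0:ℝ), δ * K = lam * max (U K) 0 := by
  set g : ℝ → ℝ := fun K => lam * max (U K) 0 - δ * K
  set B := lam * max M 0 / δ
  have hB : 0 ≤ B := by positivity
  have hg0 : 0 ≤ g 0 := by simp only [g, mul_zero, sub_zero]; positivity
  have hgB : g B ≤ 0 := by
    have hδB : δ * B = lam * max M 0 := by simp only [B]; field_simp
    have : lam * max (U B) 0 ≤ lam * max M 0 :=
      mul_le_mul_of_nonneg_left (max_le_max_right 0 (hM B hB)) hlam
    simp only [g]
    linarith
  obtain ⟨K, hK, hgK⟩ :=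
    intermediate_value_Icc' hB (by fun_prop : Continuous g).continuousOn ⟨hgB, hg0⟩
  exact ⟨K, hK.1, by simp only [g] at hgK; linarith⟩

theorem pos_of_eq_mul_max_zero {δ lam K : ℝ} {U : ℝ → ℝ} (hδ : 0 < δ) (hlam : 0 < lam)
    (hU0 : 0 < U 0) (hK : 0 ≤ K) (hstat : δ * K = lam * max (U K) 0) : 0 < U K ∧ 0 < K := by
  have hUK : 0 < U K := by
    by_contra! hle
    rw [max_eq_right hle, mul_zero] at hstat
    obtain rfl : K = 0 := (mul_eq_zero.mp hstat).resolve_left hδ.ne'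
    linarith
  refine ⟨hUK, ?_⟩
  rw [max_eq_left hUK.le] at hstat
  exact pos_of_mul_pos_right (hstat ▸ mul_pos hlam hUK) hδ.le

theorem quadratic_eq_zero_of_stationary {r δ lam c ε K u : ℝ} (hrδ : r + δ ≠ 0)
    (hKε : K + ε ≠ 0) (hstat : δ * K = lam * u) (hu : (r + δ) * u = 1 / (K + ε) - c) :
    δ * K ^ 2 + K * (δ * ε + c * lam / (r + δ)) + (lam / (r + δ)) * (c * ε - 1) = 0 := by
  have hu' : (r + δ) * u * (K + ε) = 1 - c * (K + ε) := by
    rw [hu]; field_simp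
  field_simp
  linear_combination (K + ε) * (r + δ) * hstat + lam * hu'

theorem stmt_15_general (r δ lam c ε : ℝ) (hr : 0 < r) (hδ : 0 < δ) (hlam : 0 < lam)
    (hε : 0 < ε) (hεc : ε * c < 1)
    (U : ℝ → ℝ) (hC1 : ContDiff ℝ 1 U)
    (hbd : ∃ M, ∀ K ≥ (0:ℝ), |U K| ≤ M)
    (hU0 : 0 < U 0)
    (hUeq : ∀ K ≥ (0:ℝ),
      0 = -(r + δ) * U K + (-δ * K + lam * max (U K) 0) * deriv U K + 1 / (K + ε) - c) :
    ∀ Kstar : ℝ,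
      (0 < Kstar ∧
        δ * Kstar ^ 2 + Kstar * (δ * ε + c * lam / (r + δ))
          + (lam / (r + δ)) * (c * ε - 1) = 0) →
      ∀ K : ℝ, (0 ≤ K ∧ δ * K = lam * max (U K) 0) ↔ K = Kstar := by
  rintro Kstar ⟨hKstar, hquad⟩
  have hrδ : 0 < r + δ := by linarith
  have hroot : ∀ K, 0 ≤ K → δ * K = lam * max (U K) 0 → K = Kstar := by
    intro K hK hstat
    obtain ⟨hUK, hKpos⟩ := pos_of_eq_mul_max_zero hδ hlam hU0 hK hstat
    have hode := hUeq K hK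
    rw [max_eq_left hUK.le] at hstat hode
    have hu : (r + δ) * U K = 1 / (K + ε) - c := by
      rw [show -δ * K + lam * U K = 0 by linarith, zero_mul] at hode
      linarith
    have hconst : lam / (r + δ) * (c * ε - 1) < 0 :=
      mul_neg_of_pos_of_neg (by positivity) (by linarith)
    exact eq_of_quadratic_eq_zero_of_pos (b := δ * ε + c * lam / (r + δ)) hδ hconst
      hKpos hKstar
      (by linear_combination quadratic_eq_zero_of_stationary hrδ.ne' (by positivity) hstat hu)
      (by linear_combination hquad)
  obtain ⟨M, hM⟩ := hbd
  obtain ⟨K₀, hK₀, hstat₀⟩ := exists_nonneg_eq_mul_max_zero hδ hlam.le hC1.continuous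
    fun K hK => (le_abs_self _).trans (hM K hK)
  intro K
  refine ⟨fun ⟨hK, hstat⟩ => hroot K hK hstat, ?_⟩
  rintro rfl
  obtain rfl := hroot K₀ hK₀ hstat₀
  exact ⟨hK₀, hstat₀⟩

/-- For the penalized model (machines cannot be sold), the drift λ(U)₊ has a unique
nonnegative stationary point, which equals the positive root K* of the original
quadratic. -/
theorem stmt_15 (r δ lam c ε : ℝ) (hr : 0 < r) (hδ : 0 < δ) (hlam : 0 < lam)
    (hc : 0 < c) (hε : 0 < ε) (hεc : ε * c < 1)
    (U : ℝ → ℝ) (hC1 : ContDiff ℝ 1 U)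
    (hbd : ∃ M, ∀ K ≥ (0:ℝ), |U K| ≤ M)
    (hdec : AntitoneOn U (Set.Ici 0)) (hU0 : 0 < U 0)
    (hUeq : ∀ K ≥ (0:ℝ),
      0 = -(r + δ) * U K + (-δ * K + lam * max (U K) 0) * deriv U K + 1 / (K + ε) - c) :
    ∀ Kstar : ℝ,
      (0 < Kstar ∧
        δ * Kstar ^ 2 + Kstar * (δ * ε + c * lam / (r + δ))
          + (lam / (r + δ)) * (c * ε - 1) = 0) →
      ∀ K : ℝ, (0 ≤ K ∧ δ * K = lam * max (U K) 0) ↔ K = Kstar :=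
  stmt_15_general r δ lam c ε hr hδ hlam hε hεc U hC1 hbd hU0 hUeq
end
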